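/- arXiv:1904.03169 — 2 statements merged into one kernel-verified Lean document; each statement's English description precedes it below -/
import Mathlib

section
/- Let X₁, X₂, … be a strictly stationary and ergodic sequence of real random variables whose common distribution has essential supremum γ = sup{x : P(X₁ ≤ x) < 1} < ∞, and suppose P(X₁ = γ) = 0 and P(X₁ = γ − a) = 0 for a fixed a > 0. Let (kₙ) be a sequence of integers with 1 ≤ kₙ ≤ n and kₙ/n → 1. Then (1/n) Σ_{i=1}^n 1{X_{kₙ:n} − a < X_i < X_{kₙ:n}} converges almost surely to P(X₁ > γ − a) as n → ∞, where X_{kₙ:n} denotes the kₙ-th smallest value among X₁, …, Xₙ. -/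
open MeasureTheory Filter Set
open scoped Topology ENNReal

noncomputable section

/-- The shift map on real sequences. -/
def seqShift (y : ℕ → ℝ) : ℕ → ℝ := fun n => y (n + 1)

/-- The path map associating to each sample point the sequence of observations. -/
def path {Ω : Type*} (X : ℕ → Ω → ℝ) (ω : Ω) : ℕ → ℝ := fun n => X n ω

/-- The `k`-th smallest value (k counted from 1) among `x 0, …, x (n-1)`. -/
def ordStat (k n : ℕ) (x : ℕ → ℝ) : ℝ :=
  ((List.ofFn (fun i : Fin n => x i)).insertionSort (· ≤ ·)).getD (k - 1) 0

/-- Number of observations among `x 0, …, x (n-1)` in the left `a`-neighborhood of the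
`k`-th order statistic. -/
def nearCount (k n : ℕ) (a : ℝ) (x : ℕ → ℝ) : ℕ :=
  ((Finset.range n).filter
    (fun i => ordStat k n x - a < x i ∧ x i < ordStat k n x)).card

/-- Sum of observations among `x 0, …, x (n-1)` in the left `a`-neighborhood of the
`k`-th order statistic. -/
def nearSum (k n : ℕ) (a : ℝ) (x : ℕ → ℝ) : ℝ :=
  ∑ i ∈ Finset.range n,
    if ordStat k n x - a < x i ∧ x i < ordStat k n x then x i else 0

/-- The right endpoint `sup {x : P(X ≤ x) < 1}` of the support of `X`, as an extended real. -/
def rightEndpoint {Ω : Type*} [MeasurableSpace Ω] (μ : Measure Ω) (X : Ω → ℝ) : EReal :=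
  sSup ((fun r : ℝ => (r : EReal)) '' {r : ℝ | μ {ω | X ω ≤ r} < 1})

/-! Fix `t m ↑ γ`. Since `P(X₀ ≤ t m) < 1` and `kₙ/n → 1`, the ergodic theorem forces
`X_{kₙ:n} > t m` for large `n`, while `X_{kₙ:n} ≤ γ` almost surely by stationarity. So the count is
squeezed between the numbers of observations in `(γ - a, t m)` and in `(t m - a, ∞)`, whose
frequencies converge to `P(γ - a < X₀ < t m)` and `P(t m - a < X₀)`; as `m → ∞` both tend to
`P(γ - a < X₀)` because `X₀` has no atoms at `γ` and `γ - a`.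

Birkhoff's theorem for bounded observables follows Garsia's proof: the limsup of the ergodic
averages is invariant, hence a.e. constant, and the maximal ergodic theorem bounds that constant
by the mean. -/

lemma limsup_eq_limsup_of_tendsto_sub_nhds_zero {u v : ℕ → ℝ}
    (hu : IsBoundedUnder (· ≤ ·) atTop u) (hu' : IsBoundedUnder (· ≥ ·) atTop u)
    (h : Tendsto (v - u) atTop (𝓝 0)) : limsup v atTop = limsup u atTop := by
  have hv : v = u + (v - u) := by abel
  have hd := h.isBoundedUnder_le
  have hd' := h.isBoundedUnder_ge
  rw [hv]
  refine le_antisymm ?_ ?_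
  · simpa [h.limsup_eq] using limsup_add_le hu' hu hd'.isCoboundedUnder_le hd
  · simpa [h.liminf_eq] using le_limsup_add hu hu'.isCoboundedUnder_le hd hd'

section Birkhoff

variable {α : Type*} {T : α → α} {f : α → ℝ}

def birkhoffMax (T : α → α) (f : α → ℝ) : ℕ → α → ℝ
  | 0 => 0
  | N + 1 => birkhoffMax T f N ⊔ birkhoffSum T f (N + 1)

lemma birkhoffMax_nonneg (N : ℕ) (x : α) : 0 ≤ birkhoffMax T f N x := by
  induction N with
  | zero => exact le_rfl
  | succ N ih => exact ih.trans (le_max_left _ _)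

lemma birkhoffMax_mono (x : α) : Monotone (birkhoffMax T f · x) :=
  monotone_nat_of_le_succ fun _ => le_max_left _ _

lemma birkhoffSum_le_birkhoffMax {k N : ℕ} (hk : k ≤ N) (x : α) :
    birkhoffSum T f k x ≤ birkhoffMax T f N x := by
  obtain _ | k := k
  · simpa using birkhoffMax_nonneg N x
  · exact (le_max_right _ _).trans (birkhoffMax_mono x hk)

lemma birkhoffMax_le_max_add (N : ℕ) (x : α) :
    birkhoffMax T f N x ≤ max 0 (f x + birkhoffMax T f N (T x)) := by
  induction N with
  | zero => exact le_max_left _ _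
  | succ N ih =>
    refine max_le (ih.trans ?_) ?_
    · gcongr
      exact birkhoffMax_mono _ N.le_succ
    · rw [birkhoffSum_succ']
      exact le_max_of_le_right (by gcongr; exact birkhoffSum_le_birkhoffMax N.le_succ _)

lemma abs_birkhoffAverage_le {C : ℝ} (hC : ∀ x, |f x| ≤ C) (n : ℕ) (x : α) :
    |birkhoffAverage ℝ T f n x| ≤ C := by
  obtain rfl | hn := n.eq_zero_or_pos
  · simpa using (abs_nonneg _).trans (hC x)
  have hn' : (0 : ℝ) < n := Nat.cast_pos.2 hn
  have hS : |birkhoffSum T f n x| ≤ n * C := calc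
    |birkhoffSum T f n x| ≤ ∑ j ∈ Finset.range n, |f (T^[j] x)| := Finset.abs_sum_le_sum_abs _ _
    _ ≤ n * C := by simpa using Finset.sum_le_sum fun j (_ : j ∈ Finset.range n) => hC (T^[j] x)
  rw [birkhoffAverage, smul_eq_mul, abs_mul, abs_inv, Nat.abs_cast, inv_mul_le_iff₀ hn']
  exact hS

lemma limsup_birkhoffAverage_apply {C : ℝ} (hC : ∀ x, |f x| ≤ C) (x : α) :
    limsup (birkhoffAverage ℝ T f · (T x)) atTop = limsup (birkhoffAverage ℝ T f · x) atTop := by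
  have hf : Bornology.IsBounded (range f) :=
    isBounded_iff_forall_norm_le.2 ⟨C, forall_mem_range.2 hC⟩
  exact limsup_eq_limsup_of_tendsto_sub_nhds_zero
    (isBoundedUnder_of ⟨C, fun n => (abs_le.1 (abs_birkhoffAverage_le hC n x)).2⟩)
    (isBoundedUnder_of ⟨-C, fun n => (abs_le.1 (abs_birkhoffAverage_le hC n x)).1⟩)
    (tendsto_birkhoffAverage_apply_sub_birkhoffAverage' ℝ hf T x)

variable [MeasurableSpace α] {μ : Measure α}

lemma measurable_birkhoffSum (hT : Measurable T) (hf : Measurable f) (n : ℕ) :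
    Measurable (birkhoffSum T f n) :=
  Finset.measurable_sum _ fun j _ => hf.comp (hT.iterate j)

lemma measurable_birkhoffMax (hT : Measurable T) (hf : Measurable f) (N : ℕ) :
    Measurable (birkhoffMax T f N) := by
  induction N with
  | zero => exact measurable_const
  | succ N ih => exact ih.sup (measurable_birkhoffSum hT hf _)

lemma integrable_birkhoffSum (hT : MeasurePreserving T μ μ) (hf : Integrable f μ) (n : ℕ) :
    Integrable (birkhoffSum T f n) μ :=
  integrable_finsetSum _ fun j _ => (hT.iterate j).integrable_comp_of_integrable hf

lemma integrable_birkhoffMax (hT : MeasurePreserving T μ μ) (hf : Integrable f μ) (N : ℕ) :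
    Integrable (birkhoffMax T f N) μ := by
  induction N with
  | zero => exact integrable_zero _ _ _
  | succ N ih => exact ih.sup (integrable_birkhoffSum hT hf _)

/-- The maximal ergodic theorem. -/
theorem setIntegral_birkhoffMax_pos_nonneg (hT : MeasurePreserving T μ μ) (hfm : Measurable f)
    (hf : Integrable f μ) (N : ℕ) :
    0 ≤ ∫ x in {x | 0 < birkhoffMax T f N x}, f x ∂μ := by
  set M := birkhoffMax T f N
  set E := {x | 0 < M x}
  have hM : Integrable M μ := integrable_birkhoffMax hT hf N
  have hMT : Integrable (M ∘ T) μ := hT.integrable_comp_of_integrable hM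
  have hE : MeasurableSet E :=
    measurableSet_lt measurable_const (measurable_birkhoffMax hT.measurable hfm N)
  have hsub : ∀ x ∈ E, M x - M (T x) ≤ f x := fun x hx => by
    have := (le_max_iff.1 (birkhoffMax_le_max_add N x)).resolve_left (not_le.2 hx)
    linarith
  have hcomp : ∫ x, M (T x) ∂μ = ∫ x, M x ∂μ := by
    rw [← integral_map hT.measurable.aemeasurable (hT.map_eq.symm ▸ hM.aestronglyMeasurable),
      hT.map_eq]
  calc 0 = ∫ x, M x ∂μ - ∫ x, M (T x) ∂μ := by rw [hcomp, sub_self]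
    _ ≤ ∫ x in E, M x ∂μ - ∫ x in E, M (T x) ∂μ := by
        refine sub_le_sub (setIntegral_eq_integral_of_forall_compl_eq_zero fun x hx =>
            le_antisymm (not_lt.1 hx) (birkhoffMax_nonneg N x)).ge ?_
        exact setIntegral_le_integral hMT (.of_forall fun x => birkhoffMax_nonneg N (T x))
    _ = ∫ x in E, (M x - M (T x)) ∂μ := (integral_sub hM.integrableOn hMT.integrableOn).symm
    _ ≤ ∫ x in E, f x ∂μ :=
        setIntegral_mono_on (hM.sub hMT).integrableOn hf.integrableOn hE hsub

theorem integral_nonneg_of_ae_exists_birkhoffSum_pos (hT : MeasurePreserving T μ μ)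
    (hfm : Measurable f) (hf : Integrable f μ) (h : ∀ᵐ x ∂μ, ∃ n, 0 < birkhoffSum T f n x) :
    0 ≤ ∫ x, f x ∂μ := by
  set E : ℕ → Set α := fun N => {x | 0 < birkhoffMax T f N x}
  have hE : ∀ N, MeasurableSet (E N) := fun N =>
    measurableSet_lt measurable_const (measurable_birkhoffMax hT.measurable hfm N)
  have hE_mono : Monotone E := fun _ _ hNM _ hx => hx.trans_le (birkhoffMax_mono _ hNM)
  have hE_univ : (⋃ N, E N) =ᵐ[μ] (univ : Set α) := eventuallyEq_univ.2 <|
    h.mono fun x ⟨n, hn⟩ => mem_iUnion.2 ⟨n, hn.trans_le (birkhoffSum_le_birkhoffMax le_rfl x)⟩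
  have hlim := tendsto_setIntegral_of_monotone hE hE_mono hf.integrableOn
  rw [setIntegral_congr_set hE_univ, setIntegral_univ] at hlim
  exact ge_of_tendsto' hlim fun N => setIntegral_birkhoffMax_pos_nonneg hT hfm hf N

theorem ae_limsup_birkhoffAverage_le_integral [IsProbabilityMeasure μ] (hT : Ergodic T μ)
    (hf : Measurable f) {C : ℝ} (hC : ∀ x, |f x| ≤ C) :
    ∀ᵐ x ∂μ, limsup (birkhoffAverage ℝ T f · x) atTop ≤ ∫ x, f x ∂μ := by
  have hφ : Measurable fun x => limsup (birkhoffAverage ℝ T f · x) atTop :=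
    .limsup fun n => (measurable_birkhoffSum hT.measurable hf n).const_smul (n : ℝ)⁻¹
  obtain ⟨c, hc⟩ := hT.quasiErgodic.ae_eq_const_of_ae_eq_comp₀ hφ.nullMeasurable
    (.of_forall (limsup_birkhoffAverage_apply hC))
  suffices c ≤ ∫ x, f x ∂μ from hc.mono fun x hx => hx.trans_le this
  refine le_of_forall_sub_le fun ε hε => ?_
  have hfi : Integrable f μ := .of_bound hf.aestronglyMeasurable C (.of_forall hC)
  have hpos : ∀ᵐ x ∂μ, ∃ n, 0 < birkhoffSum T (f - fun _ => c - ε) n x := by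
    filter_upwards [hc] with x hx
    have hfreq : ∃ᶠ n in atTop, c - ε < birkhoffAverage ℝ T f n x :=
      frequently_lt_of_lt_limsup
        (isCoboundedUnder_le_of_le atTop fun n => (abs_le.1 (abs_birkhoffAverage_le hC n x)).1)
        (by rw [hx, Function.const_apply]; linarith)
    obtain ⟨n, hn, hn0⟩ := (hfreq.and_eventually (eventually_ne_atTop 0)).exists
    refine ⟨n, pos_of_mul_pos_right (a := (n : ℝ)⁻¹) ?_ (by positivity)⟩
    have := congrFun (birkhoffAverage_of_comp_eq ℝ (f := T) (g := fun _ => c - ε) rfl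
      (Nat.cast_ne_zero.2 hn0)) x
    rw [← smul_eq_mul, ← birkhoffAverage, birkhoffAverage_sub, Pi.sub_apply, Pi.sub_apply, this]
    linarith
  have := integral_nonneg_of_ae_exists_birkhoffSum_pos hT.toMeasurePreserving
    (hf.sub measurable_const) (hfi.sub (integrable_const _)) hpos
  simp only [Pi.sub_apply] at this
  rw [integral_sub hfi (integrable_const _), integral_const] at this
  simpa using this

theorem ae_tendsto_birkhoffAverage [IsProbabilityMeasure μ] (hT : Ergodic T μ)
    (hf : Measurable f) {C : ℝ} (hC : ∀ x, |f x| ≤ C) :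
    ∀ᵐ x ∂μ, Tendsto (birkhoffAverage ℝ T f · x) atTop (𝓝 (∫ x, f x ∂μ)) := by
  have hC' : ∀ x, |(-f) x| ≤ C := fun x => by simpa using hC x
  filter_upwards [ae_limsup_birkhoffAverage_le_integral hT hf hC,
    ae_limsup_birkhoffAverage_le_integral hT hf.neg hC'] with x hle hge
  simp only [birkhoffAverage_neg, Pi.neg_apply, integral_neg] at hge
  have hbdd : ∀ g : α → ℝ, (∀ x, |g x| ≤ C) →
      IsBoundedUnder (· ≤ ·) atTop (birkhoffAverage ℝ T g · x) := fun g hg =>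
    isBoundedUnder_of ⟨C, fun n => (abs_le.1 (abs_birkhoffAverage_le hg n x)).2⟩
  refine tendsto_order.2 ⟨fun b hb => ?_, fun b hb => eventually_lt_of_limsup_lt
    (hle.trans_lt hb) (hbdd f hC)⟩
  have hbdd' := hbdd (-f) hC'
  simp only [birkhoffAverage_neg, Pi.neg_apply] at hbdd'
  exact (eventually_lt_of_limsup_lt (hge.trans_lt (neg_lt_neg hb)) hbdd').mono
    fun n hn => neg_lt_neg_iff.1 hn

end Birkhoff

open scoped Classical in
def countIn (s : Set ℝ) (n : ℕ) (x : ℕ → ℝ) : ℕ :=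
  ((Finset.range n).filter (x · ∈ s)).card

lemma countIn_mono {s t : Set ℝ} (h : s ⊆ t) (n : ℕ) (x : ℕ → ℝ) :
    countIn s n x ≤ countIn t n x := by
  classical
  exact Finset.card_le_card (Finset.monotone_filter_right _ fun _ _ hi => h hi)

lemma nearCount_eq_countIn (k n : ℕ) (a : ℝ) (x : ℕ → ℝ) :
    nearCount k n a x = countIn (Ioo (ordStat k n x - a) (ordStat k n x)) n x := by
  simp only [nearCount, countIn, mem_Ioo]

lemma countP_ofFn_le_eq_countIn (n : ℕ) (x : ℕ → ℝ) (t : ℝ) :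
    (List.ofFn (fun i : Fin n => x i)).countP (· ≤ t) = countIn (Iic t) n x := by
  rw [← Multiset.coe_countP, ← Fin.univ_val_map, Multiset.countP_map, countIn,
    Finset.card_filter, ← Fin.sum_univ_eq_sum_range]
  simp only [mem_Iic]
  rw [← Finset.card_filter]
  rfl

lemma exists_ordStat_eq {k n : ℕ} (hk : 0 < k) (hkn : k ≤ n) (x : ℕ → ℝ) :
    ∃ i < n, ordStat k n x = x i := by
  have hmem : ordStat k n x ∈ List.ofFn (fun i : Fin n => x i) := by
    refine (List.perm_insertionSort (· ≤ ·) _).subset ?_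
    rw [ordStat, List.getD_eq_getElem _ _ (by simp; omega)]
    exact List.getElem_mem _
  obtain ⟨i, hi⟩ := List.mem_ofFn.1 hmem
  exact ⟨i, i.isLt, hi.symm⟩

lemma le_countIn_Iic_of_ordStat_le {k n : ℕ} (hk : 0 < k) (hkn : k ≤ n) {x : ℕ → ℝ} {t : ℝ}
    (h : ordStat k n x ≤ t) : k ≤ countIn (Iic t) n x := by
  set l := (List.ofFn (fun i : Fin n => x i)).insertionSort (· ≤ ·)
  have hl : l.length = n := by simp [l]
  have hsorted : l.Pairwise (· ≤ ·) := List.pairwise_insertionSort _ _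
  have hkl : k - 1 < l.length := by omega
  have htake : ∀ y ∈ l.take k, y ≤ t := by
    intro y hy
    obtain ⟨j, hj, rfl⟩ := List.mem_iff_getElem.1 hy
    rw [List.getElem_take]
    refine le_trans ?_ ((List.getD_eq_getElem l 0 hkl).symm.trans_le h)
    exact hsorted.rel_get_of_le (a := ⟨j, by simp at hj; omega⟩) (b := ⟨k - 1, hkl⟩)
      (Fin.mk_le_mk.2 (by simp at hj; omega))
  calc k = (l.take k).countP (· ≤ t) := by
        rw [List.countP_eq_length.2 (by simpa using htake), List.length_take]; omega
    _ ≤ l.countP (· ≤ t) := (List.take_sublist k l).countP_le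
    _ = countIn (Iic t) n x := by
        rw [(List.perm_insertionSort (· ≤ ·) _).countP_eq, countP_ofFn_le_eq_countIn]

lemma lt_ordStat_of_countIn_Iic_lt {k n : ℕ} (hk : 0 < k) (hkn : k ≤ n) {x : ℕ → ℝ} {t : ℝ}
    (h : countIn (Iic t) n x < k) : t < ordStat k n x :=
  not_le.1 fun h' => h.not_ge (le_countIn_Iic_of_ordStat_le hk hkn h')

lemma tendsto_of_forall_squeeze {ι κ α : Type*} [LinearOrder α] [TopologicalSpace α]
    [OrderTopology α] {l : Filter ι} {l' : Filter κ} [l'.NeBot] {u : ι → α}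
    {lo up : κ → ι → α} {L U : κ → α} {p : α}
    (hlo : ∀ m, Tendsto (lo m) l (𝓝 (L m))) (hup : ∀ m, Tendsto (up m) l (𝓝 (U m)))
    (hL : Tendsto L l' (𝓝 p)) (hU : Tendsto U l' (𝓝 p))
    (h : ∀ m, ∀ᶠ n in l, lo m n ≤ u n ∧ u n ≤ up m n) : Tendsto u l (𝓝 p) := by
  refine tendsto_order.2 ⟨fun b hb => ?_, fun b hb => ?_⟩
  · obtain ⟨m, hm⟩ := ((tendsto_order.1 hL).1 b hb).exists
    exact ((tendsto_order.1 (hlo m)).1 b hm).and (h m) |>.mono fun n hn => hn.1.trans_le hn.2.1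
  · obtain ⟨m, hm⟩ := ((tendsto_order.1 hU).2 b hb).exists
    exact ((tendsto_order.1 (hup m)).2 b hm).and (h m) |>.mono fun n hn => hn.2.2.trans_lt hn.1

lemma eventually_lt_ordStat {x : ℕ → ℝ} {k : ℕ → ℕ} {t F : ℝ}
    (hk : ∀ n, 1 ≤ n → 1 ≤ k n ∧ k n ≤ n) (hk1 : Tendsto (fun n => (k n : ℝ) / n) atTop (𝓝 1))
    (hF : F < 1) (hFx : Tendsto (fun n => (countIn (Iic t) n x : ℝ) / n) atTop (𝓝 F)) :
    ∀ᶠ n in atTop, t < ordStat (k n) n x := by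
  have hF₁ : F < (F + 1) / 2 := by linarith
  have hF₂ : (F + 1) / 2 < 1 := by linarith
  filter_upwards [(tendsto_order.1 hFx).2 _ hF₁, (tendsto_order.1 hk1).1 _ hF₂,
    eventually_ge_atTop 1] with n hcount hkn hn
  refine lt_ordStat_of_countIn_Iic_lt (hk n hn).1 (hk n hn).2 ?_
  exact_mod_cast (div_lt_div_iff_of_pos_right (by positivity)).1 (hcount.trans hkn)

lemma tendsto_nearCount_div {x : ℕ → ℝ} {k : ℕ → ℕ} {γ a p : ℝ} {t F L U : ℕ → ℝ}
    (hk : ∀ n, 1 ≤ n → 1 ≤ k n ∧ k n ≤ n) (hk1 : Tendsto (fun n => (k n : ℝ) / n) atTop (𝓝 1))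
    (hx : ∀ i, x i ≤ γ) (hF : ∀ m, F m < 1)
    (hFx : ∀ m, Tendsto (fun n => (countIn (Iic (t m)) n x : ℝ) / n) atTop (𝓝 (F m)))
    (hLx : ∀ m, Tendsto (fun n => (countIn (Ioo (γ - a) (t m)) n x : ℝ) / n) atTop (𝓝 (L m)))
    (hUx : ∀ m, Tendsto (fun n => (countIn (Ioi (t m - a)) n x : ℝ) / n) atTop (𝓝 (U m)))
    (hL : Tendsto L atTop (𝓝 p)) (hU : Tendsto U atTop (𝓝 p)) :
    Tendsto (fun n => (nearCount (k n) n a x : ℝ) / n) atTop (𝓝 p) := by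
  refine tendsto_of_forall_squeeze hLx hUx hL hU fun m => ?_
  filter_upwards [eventually_lt_ordStat hk hk1 (hF m) (hFx m), eventually_ge_atTop 1]
    with n ht hn
  obtain ⟨i, -, hi⟩ := exists_ordStat_eq (hk n hn).1 (hk n hn).2 x
  have hγ : ordStat (k n) n x ≤ γ := hi ▸ hx i
  rw [nearCount_eq_countIn]
  constructor <;> gcongr <;> refine countIn_mono (fun y hy => ?_) n x
  · exact ⟨by linarith [hy.1], hy.2.trans ht⟩
  · exact lt_trans (by linarith) hy.1

section Paths

lemma measurable_seqShift : Measurable seqShift :=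
  measurable_pi_lambda _ fun n => measurable_pi_apply (n + 1)

lemma measurable_path {Ω : Type*} [MeasurableSpace Ω] {X : ℕ → Ω → ℝ}
    (hX : ∀ n, Measurable (X n)) : Measurable (path X) :=
  measurable_pi_lambda _ hX

lemma seqShift_iterate_apply (j : ℕ) (y : ℕ → ℝ) (m : ℕ) : seqShift^[j] y m = y (m + j) := by
  induction j generalizing y with
  | zero => rfl
  | succ j ih => rw [Function.iterate_succ_apply, ih, seqShift, add_assoc, add_comm j 1]

lemma birkhoffSum_indicator_eq_countIn {s : Set ℝ} (n : ℕ) (y : ℕ → ℝ) :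
    birkhoffSum seqShift ({z : ℕ → ℝ | z 0 ∈ s}.indicator 1) n y = (countIn s n y : ℝ) := by
  classical
  simp only [birkhoffSum, indicator_apply, mem_ofPred_eq, seqShift_iterate_apply, zero_add,
    Pi.one_apply, countIn, Finset.sum_boole]

variable {Ω : Type*} [MeasurableSpace Ω] {μ : Measure Ω} {X : ℕ → Ω → ℝ}

lemma identDistrib_of_measurePreserving_seqShift (hX : ∀ n, Measurable (X n))
    (hshift : MeasurePreserving seqShift (μ.map (path X)) (μ.map (path X))) (i : ℕ) :
    ProbabilityTheory.IdentDistrib (X i) (X 0) μ μ where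
  aemeasurable_fst := (hX i).aemeasurable
  aemeasurable_snd := (hX 0).aemeasurable
  map_eq := by
    have hX_eq : X i = (fun y : ℕ → ℝ => y 0) ∘ seqShift^[i] ∘ path X := by
      ext ω; simp [seqShift_iterate_apply, path]
    rw [hX_eq, ← Measure.map_map (measurable_pi_apply 0)
        ((measurable_seqShift.iterate i).comp (measurable_path hX)),
      ← Measure.map_map (measurable_seqShift.iterate i) (measurable_path hX),
      (hshift.iterate i).map_eq, Measure.map_map (measurable_pi_apply 0) (measurable_path hX)]
    rfl

lemma ae_tendsto_countIn_div [IsProbabilityMeasure μ] (hX : ∀ n, Measurable (X n))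
    (herg : Ergodic seqShift (μ.map (path X))) {s : Set ℝ} (hs : MeasurableSet s) :
    ∀ᵐ ω ∂μ, Tendsto (fun n => (countIn s n (path X ω) : ℝ) / n) atTop
      (𝓝 (μ.real (X 0 ⁻¹' s))) := by
  have hpath := measurable_path hX
  have : IsProbabilityMeasure (μ.map (path X)) :=
    Measure.isProbabilityMeasure_map hpath.aemeasurable
  have hA : MeasurableSet {z : ℕ → ℝ | z 0 ∈ s} := measurable_pi_apply 0 hs
  have hbound : ∀ z, |{z : ℕ → ℝ | z 0 ∈ s}.indicator (1 : (ℕ → ℝ) → ℝ) z| ≤ 1 := fun z => by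
    by_cases hz : z ∈ {z : ℕ → ℝ | z 0 ∈ s} <;> simp [hz]
  have hint : ∫ z, {z : ℕ → ℝ | z 0 ∈ s}.indicator 1 z ∂(μ.map (path X)) = μ.real (X 0 ⁻¹' s) := by
    rw [integral_indicator_one hA, map_measureReal_apply hpath hA]
    rfl
  have := ae_tendsto_birkhoffAverage herg (measurable_one.indicator hA) hbound
  rw [hint] at this
  filter_upwards [ae_of_ae_map hpath.aemeasurable this] with ω hω
  convert hω using 2 with n
  rw [birkhoffAverage, birkhoffSum_indicator_eq_countIn, smul_eq_mul, div_eq_inv_mul]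

lemma measure_le_lt_one_of_lt_rightEndpoint {Y : Ω → ℝ} {t : ℝ}
    (h : (t : EReal) < rightEndpoint μ Y) : μ {ω | Y ω ≤ t} < 1 := by
  obtain ⟨_, ⟨r, hr, rfl⟩, htr⟩ := lt_sSup_iff.1 h
  exact (measure_mono fun ω (hω : Y ω ≤ t) => hω.trans (EReal.coe_lt_coe_iff.1 htr).le).trans_lt hr

lemma ae_le_of_rightEndpoint_eq [IsProbabilityMeasure μ] {Y : Ω → ℝ} (hY : Measurable Y)
    {γ : ℝ} (h : rightEndpoint μ Y = γ) : ∀ᵐ ω ∂μ, Y ω ≤ γ := by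
  have hr : ∀ r, γ < r → ∀ᵐ ω ∂μ, Y ω ≤ r := fun r hr => by
    refine mem_ae_iff.2 ((prob_compl_eq_zero_iff (hY measurableSet_Iic)).2 ?_)
    by_contra hne
    have : (r : EReal) ≤ γ := h ▸ le_sSup ⟨r, prob_le_one.lt_of_ne hne, rfl⟩
    exact (EReal.coe_le_coe_iff.1 this).not_gt hr
  filter_upwards [ae_all_iff.2 fun m : ℕ => hr (γ + 1 / (m + 1)) (by simp; positivity)]
    with ω hω
  exact ge_of_tendsto' (by simpa using tendsto_one_div_add_atTop_nhds_zero_nat.const_add γ) hω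

lemma tendsto_measureReal_preimage_Ioo_of_ae_lt [IsFiniteMeasure μ] {Y : Ω → ℝ}
    {b c : ℝ} {t : ℕ → ℝ} (ht : Monotone t) (htc : ∀ m, t m < c)
    (hlim : Tendsto t atTop (𝓝 c)) (hYc : ∀ᵐ ω ∂μ, Y ω < c) :
    Tendsto (fun m => μ.real (Y ⁻¹' Ioo b (t m))) atTop (𝓝 (μ.real (Y ⁻¹' Ioi b))) := by
  have hunion : ⋃ m, Y ⁻¹' Ioo b (t m) = Y ⁻¹' Ioo b c := by
    rw [← preimage_iUnion]
    congr 1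
    ext y
    simp only [mem_iUnion, mem_Ioo]
    constructor
    · rintro ⟨m, hb, hm⟩
      exact ⟨hb, hm.trans (htc m)⟩
    · rintro ⟨hb, hc⟩
      obtain ⟨m, hm⟩ := ((tendsto_order.1 hlim).1 y hc).exists
      exact ⟨m, hb, hm⟩
  have hae : Y ⁻¹' Ioo b c =ᵐ[μ] Y ⁻¹' Ioi b :=
    eventuallyEq_set.2 (hYc.mono fun ω hω => ⟨And.left, fun hb => ⟨hb, hω⟩⟩)
  have := tendsto_measure_iUnion_atTop (μ := μ) (s := fun m => Y ⁻¹' Ioo b (t m))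
    fun m m' h => preimage_mono (Ioo_subset_Ioo_right (ht h))
  rw [hunion, measure_congr hae] at this
  exact (ENNReal.tendsto_toReal (measure_ne_top _ _)).comp this

lemma tendsto_measureReal_preimage_Ioi [IsFiniteMeasure μ] {Y : Ω → ℝ} (hY : Measurable Y)
    {c : ℝ} {t : ℕ → ℝ} (ht : Monotone t) (htc : ∀ m, t m < c)
    (hlim : Tendsto t atTop (𝓝 c)) (hc : μ (Y ⁻¹' {c}) = 0) :
    Tendsto (fun m => μ.real (Y ⁻¹' Ioi (t m))) atTop (𝓝 (μ.real (Y ⁻¹' Ioi c))) := by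
  have hinter : ⋂ m, Y ⁻¹' Ioi (t m) = Y ⁻¹' Ici c := by
    rw [← preimage_iInter]
    congr 1
    ext y
    simp only [mem_iInter, mem_Ioi, mem_Ici]
    exact ⟨fun h => le_of_tendsto' hlim fun m => (h m).le, fun h m => (htc m).trans_le h⟩
  have hae : Y ⁻¹' Ici c =ᵐ[μ] Y ⁻¹' Ioi c :=
    eventuallyEq_set.2 ((measure_eq_zero_iff_ae_notMem.1 hc).mono fun ω hω =>
      ⟨fun h => lt_of_le_of_ne h (Ne.symm hω), fun h => (show c < Y ω from h).le⟩)
  have := tendsto_measure_iInter_atTop (μ := μ)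
    (fun m => (hY measurableSet_Ioi).nullMeasurableSet)
    (fun m m' h => preimage_mono (Ioi_subset_Ioi (ht h))) ⟨0, measure_ne_top _ _⟩
  rw [hinter, measure_congr hae] at this
  exact (ENNReal.tendsto_toReal (measure_ne_top _ _)).comp this

end Paths

theorem stmt5_general {Ω : Type*} [MeasurableSpace Ω] (μ : Measure Ω) [IsProbabilityMeasure μ]
    (X : ℕ → Ω → ℝ) (hX : ∀ n, Measurable (X n))
    (herg : Ergodic seqShift (Measure.map (path X) μ))
    (γ : ℝ) (hγ : rightEndpoint μ (X 0) = (γ : EReal))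
    (a : ℝ)
    (h1 : μ {ω | X 0 ω = γ} = 0) (h2 : μ {ω | X 0 ω = γ - a} = 0)
    (k : ℕ → ℕ) (hk : ∀ n, 1 ≤ n → 1 ≤ k n ∧ k n ≤ n)
    (hk1 : Tendsto (fun n => (k n : ℝ) / n) atTop (𝓝 1)) :
    ∀ᵐ ω ∂μ, Tendsto (fun n => (nearCount (k n) n a (path X ω) : ℝ) / n) atTop
      (𝓝 ((μ {ω' | γ - a < X 0 ω'}).toReal)) := by
  obtain ⟨t, ht_mono, ht_lt, ht_lim⟩ := exists_seq_strictMono_tendsto γ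
  have hle : ∀ᵐ ω ∂μ, X 0 ω ≤ γ := ae_le_of_rightEndpoint_eq (hX 0) hγ
  have hlt : ∀ᵐ ω ∂μ, X 0 ω < γ := by
    filter_upwards [hle, measure_eq_zero_iff_ae_notMem.1 h1] with ω h h' using h.lt_of_ne h'
  have hall : ∀ᵐ ω ∂μ, ∀ i, X i ω ≤ γ := ae_all_iff.2 fun i =>
    (identDistrib_of_measurePreserving_seqShift hX herg.toMeasurePreserving i).symm.ae_snd
      measurableSet_Iic hle
  have hF : ∀ m, μ.real (X 0 ⁻¹' Iic (t m)) < 1 := fun m => by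
    refine ENNReal.toReal_lt_of_lt_ofReal (ENNReal.ofReal_one ▸ ?_)
    exact measure_le_lt_one_of_lt_rightEndpoint (hγ ▸ EReal.coe_lt_coe_iff.2 (ht_lt m))
  filter_upwards [hall,
    ae_all_iff.2 fun m => ae_tendsto_countIn_div hX herg (s := Iic (t m)) measurableSet_Iic,
    ae_all_iff.2 fun m => ae_tendsto_countIn_div hX herg (s := Ioo (γ - a) (t m)) measurableSet_Ioo,
    ae_all_iff.2 fun m => ae_tendsto_countIn_div hX herg (s := Ioi (t m - a)) measurableSet_Ioi]
    with ω hω hFω hLω hUω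
  exact tendsto_nearCount_div hk hk1 hω hF hFω hLω hUω
    (tendsto_measureReal_preimage_Ioo_of_ae_lt ht_mono.monotone ht_lt ht_lim hlt)
    (tendsto_measureReal_preimage_Ioi (hX 0) (fun _ _ h => sub_le_sub_right (ht_mono.monotone h) a)
      (fun m => sub_lt_sub_right (ht_lt m) a) (ht_lim.sub_const a) h2)

theorem stmt5 {Ω : Type*} [MeasurableSpace Ω] (μ : Measure Ω) [IsProbabilityMeasure μ]
    (X : ℕ → Ω → ℝ) (hX : ∀ n, Measurable (X n))
    (herg : Ergodic seqShift (Measure.map (path X) μ))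
    (γ : ℝ) (hγ : rightEndpoint μ (X 0) = (γ : EReal))
    (a : ℝ) (ha : 0 < a)
    (h1 : μ {ω | X 0 ω = γ} = 0) (h2 : μ {ω | X 0 ω = γ - a} = 0)
    (k : ℕ → ℕ) (hk : ∀ n, 1 ≤ n → 1 ≤ k n ∧ k n ≤ n)
    (hk1 : Tendsto (fun n => (k n : ℝ) / n) atTop (𝓝 1)) :
    ∀ᵐ ω ∂μ, Tendsto (fun n => (nearCount (k n) n a (path X ω) : ℝ) / n) atTop
      (𝓝 ((μ {ω' | γ - a < X 0 ω'}).toReal)) :=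
  stmt5_general μ X hX herg γ hγ a h1 h2 k hk hk1
end
end

section
/- Let X be a real random variable on a probability space (Ω, F, P) and let G ⊆ F be a sub-σ-field. Then there exists a G-measurable extended random variable Q : Ω → [−∞, ∞] such that P(X ≤ Q | G) = 1 almost surely, and for every G-measurable extended random variable Q' with P(X ≤ Q' | G) = 1 almost surely one has Q ≤ Q' almost surely. -/
open MeasureTheory Filter Set
open scoped Topology ENNReal

noncomputable section

/-- `Q` is a version of the conditional right endpoint of the support of `X` given the
sub-σ-field `m`: it is `m`-measurable, `P(X ≤ Q | m) = 1` a.s., and it is a.s. minimal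
among all such `m`-measurable extended random variables. -/
def IsCondRightEndpoint {Ω : Type*} [MeasurableSpace Ω] (μ : Measure Ω)
    (m : MeasurableSpace Ω) (X : Ω → ℝ) (Q : Ω → EReal) : Prop :=
  Measurable[m] Q ∧
  μ[Set.indicator {ω | (X ω : EReal) ≤ Q ω} (fun _ => (1 : ℝ)) | m] =ᵐ[μ] (fun _ => 1) ∧
  ∀ Q' : Ω → EReal, Measurable[m] Q' →
    μ[Set.indicator {ω | (X ω : EReal) ≤ Q' ω} (fun _ => (1 : ℝ)) | m] =ᵐ[μ] (fun _ => 1) →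
    ∀ᵐ ω ∂μ, Q ω ≤ Q' ω

/-- The invariant σ-field of the sequence `X`: generated by events of the form
`{ω | path X ω ∈ B}` for shift-invariant measurable sets `B` of sequences. -/
def invariantSigma {Ω : Type*} [MeasurableSpace Ω] (X : ℕ → Ω → ℝ) : MeasurableSpace Ω :=
  MeasurableSpace.generateFrom
    {A | ∃ B : Set (ℕ → ℝ), MeasurableSet B ∧ seqShift ⁻¹' B = B ∧ A = path X ⁻¹' B}

/-!
Write `g_q = P(X ≤ q | m)` for rational `q` and let `Q = inf {q : g_q ≥ 1}`. On the `m`-event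
`{g_q ≥ 1}` the event `{X ≤ q}` occurs a.s., so `X ≤ Q` a.s. Conversely, if `Q'` is
`m`-measurable with `X ≤ Q'` a.s., then `{Q' < q}` is an `m`-event contained a.s. in `{X ≤ q}`,
so `g_q = 1` on it; hence `Q ≤ q` whenever `Q' < q`, and `Q ≤ Q'` a.s. by density of `ℚ`.
-/

namespace MeasureTheory

variable {Ω : Type*} {m m0 : MeasurableSpace Ω} {μ : Measure Ω} [IsFiniteMeasure μ] {s : Set Ω}

theorem ae_mem_of_one_le_condExp_indicator (hm : m ≤ m0) (hs : MeasurableSet s) :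
    ∀ᵐ ω ∂μ, 1 ≤ μ[s.indicator (fun _ => (1 : ℝ)) | m] ω → ω ∈ s := by
  set A := {ω | 1 ≤ μ[s.indicator (fun _ => (1 : ℝ)) | m] ω}
  have hA : MeasurableSet[m] A :=
    measurableSet_le measurable_const stronglyMeasurable_condExp.measurable
  have hle : μ.real A ≤ μ.real (A ∩ s) :=
    calc μ.real A = ∫ _ in A, (1 : ℝ) ∂μ := by simp
      _ ≤ ∫ ω in A, μ[s.indicator (fun _ => (1 : ℝ)) | m] ω ∂μ :=
        setIntegral_mono_on (integrable_const 1).integrableOn integrable_condExp.integrableOn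
          (hm _ hA) fun _ hω => hω
      _ = ∫ ω in A, s.indicator (fun _ => (1 : ℝ)) ω ∂μ :=
        setIntegral_condExp hm ((integrable_const 1).indicator hs) hA
      _ = μ.real (A ∩ s) := by simp [setIntegral_indicator hs]
  have hnull : μ (A \ s) = 0 := by
    rw [← measureReal_eq_zero_iff]
    linarith [measureReal_inter_add_sdiff (μ := μ) (s := A) hs,
      measureReal_nonneg (μ := μ) (s := A \ s)]
  filter_upwards [measure_eq_zero_iff_ae_notMem.1 hnull] with ω hω hωA
  by_contra hωs
  exact hω ⟨hωA, hωs⟩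

theorem condExp_indicator_eq_one_of_ae_subset (hm : m ≤ m0) (hs : MeasurableSet s) {B : Set Ω}
    (hB : MeasurableSet[m] B) (hBs : ∀ᵐ ω ∂μ, ω ∈ B → ω ∈ s) :
    ∀ᵐ ω ∂μ, ω ∈ B → μ[s.indicator (fun _ => (1 : ℝ)) | m] ω = 1 := by
  have hind : B.indicator (s.indicator fun _ => (1 : ℝ)) =ᵐ[μ] B.indicator fun _ => 1 := by
    filter_upwards [hBs] with ω hω
    by_cases hωB : ω ∈ B <;> simp [hωB, hω]
  have h : B.indicator (μ[s.indicator (fun _ => (1 : ℝ)) | m]) =ᵐ[μ] B.indicator fun _ => 1 :=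
    calc B.indicator (μ[s.indicator (fun _ => (1 : ℝ)) | m])
        =ᵐ[μ] μ[B.indicator (s.indicator fun _ => (1 : ℝ)) | m] :=
          (condExp_indicator ((integrable_const 1).indicator hs) hB).symm
      _ =ᵐ[μ] μ[B.indicator fun _ => (1 : ℝ) | m] := condExp_congr_ae hind
      _ = B.indicator fun _ => 1 :=
          condExp_of_stronglyMeasurable hm (stronglyMeasurable_const.indicator hB)
            ((integrable_const 1).indicator (hm _ hB))
  filter_upwards [h] with ω hω hωB
  simpa [hωB] using hω

theorem condExp_indicator_ae_eq_one_iff (hm : m ≤ m0) (hs : MeasurableSet s) :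
    μ[s.indicator (fun _ => (1 : ℝ)) | m] =ᵐ[μ] (fun _ => 1) ↔ ∀ᵐ ω ∂μ, ω ∈ s := by
  constructor
  · intro h
    filter_upwards [h, ae_mem_of_one_le_condExp_indicator hm hs] with ω hω hmem
    exact hmem hω.ge
  · intro h
    filter_upwards [condExp_indicator_eq_one_of_ae_subset hm hs MeasurableSet.univ
      (h.mono fun _ hω _ => hω)] with ω hω
    exact hω trivial

end MeasureTheory

section CondRightEndpoint

variable {Ω : Type*} {m m0 : MeasurableSpace Ω} {μ : Measure Ω} {X : Ω → ℝ}

def condRightEndpoint (μ : Measure Ω) (m : MeasurableSpace Ω) (X : Ω → ℝ) (ω : Ω) : EReal :=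
  ⨅ q : ℚ, if 1 ≤ μ[{ω | X ω ≤ q}.indicator (fun _ => (1 : ℝ)) | m] ω then ((q : ℝ) : EReal)
    else ⊤

theorem measurable_condRightEndpoint : Measurable[m] (condRightEndpoint μ m X) :=
  Measurable.iInf fun _ => Measurable.ite
    (measurableSet_le measurable_const stronglyMeasurable_condExp.measurable)
    measurable_const measurable_const

theorem condRightEndpoint_le {ω : Ω} {q : ℚ}
    (hq : 1 ≤ μ[{ω | X ω ≤ q}.indicator (fun _ => (1 : ℝ)) | m] ω) :
    condRightEndpoint μ m X ω ≤ ((q : ℝ) : EReal) :=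
  (iInf_le _ q).trans_eq (if_pos hq)

variable [IsFiniteMeasure μ]

theorem ae_le_condRightEndpoint (hm : m ≤ m0) (hX : Measurable X) :
    ∀ᵐ ω ∂μ, (X ω : EReal) ≤ condRightEndpoint μ m X ω := by
  have h := ae_all_iff.2 fun q : ℚ =>
    ae_mem_of_one_le_condExp_indicator (μ := μ) (s := {ω | X ω ≤ q}) hm
      (measurableSet_le hX measurable_const)
  filter_upwards [h] with ω hω
  refine le_iInf fun q => ?_
  split_ifs with hq
  · exact EReal.coe_le_coe_iff.2 (hω q hq)
  · exact le_top

theorem condRightEndpoint_ae_le (hm : m ≤ m0) (hX : Measurable X) {Q : Ω → EReal}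
    (hQ : Measurable[m] Q) (hXQ : ∀ᵐ ω ∂μ, (X ω : EReal) ≤ Q ω) :
    ∀ᵐ ω ∂μ, condRightEndpoint μ m X ω ≤ Q ω := by
  have h := ae_all_iff.2 fun q : ℚ =>
    condExp_indicator_eq_one_of_ae_subset (s := {ω | X ω ≤ q}) (B := {ω | Q ω < (q : ℝ)}) hm
      (measurableSet_le hX measurable_const) (measurableSet_lt hQ measurable_const)
      (hXQ.mono fun ω hω hωq => EReal.coe_le_coe_iff.1 (hω.trans hωq.le))
  filter_upwards [h] with ω hω
  by_contra! hlt
  obtain ⟨q, hQq, hqE⟩ := EReal.exists_rat_btwn_of_lt hlt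
  exact (condRightEndpoint_le (hω q hQq).ge).not_gt hqE

end CondRightEndpoint

theorem stmt10 {Ω : Type*} (m : MeasurableSpace Ω) [m0 : MeasurableSpace Ω]
    (μ : Measure Ω) [IsProbabilityMeasure μ] (hm : m ≤ m0) (X : Ω → ℝ) (hX : Measurable X) :
    ∃ Q : Ω → EReal, IsCondRightEndpoint μ m X Q := by
  have hmeas : ∀ Q : Ω → EReal, Measurable[m] Q → MeasurableSet {ω | (X ω : EReal) ≤ Q ω} :=
    fun Q hQ => measurableSet_le (measurable_coe_real_ereal.comp hX) (hQ.mono hm le_rfl)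
  refine ⟨condRightEndpoint μ m X, measurable_condRightEndpoint, ?_, fun Q hQ hcond => ?_⟩
  · exact (condExp_indicator_ae_eq_one_iff hm (hmeas _ measurable_condRightEndpoint)).2
      (ae_le_condRightEndpoint hm hX)
  · exact condRightEndpoint_ae_le hm hX hQ
      ((condExp_indicator_ae_eq_one_iff hm (hmeas Q hQ)).1 hcond)
end
end
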